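/- arXiv:2210.00873 — 6 statements merged into one kernel-verified Lean document; each statement's English description precedes it below -/
import Mathlib

section
/- Let r = 4/3 and let λ(t) = (3/2)(1 + tanh(3rt/2)) = (3/2)(1 + tanh(2t)). Then the curve γ(t) = (−λ(t)/3 − 1, λ(t)) is a solution of the system ẋ = (x + y)² − 1, ẏ = r·y·(3 − y); its image lies on the line x = −y/3 − 1; γ(t) → (−1, 0) as t → −∞ and γ(t) → (−2, 3) as t → +∞. In particular, at the critical rate r_c = 4/3 there is a heteroclinic connection between the saddle equilibria (−1, 0) and (−2, 3). -/
/-!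
The logistic equation `ẏ = r y (a - y)` has the explicit front `y = (a/2)(1 + tanh (a r t / 2))`,
running from `0` to `a`. On the line `x = -y/3 - 1` the first equation reads
`ẋ = (2y/3 - 1)² - 1 = -(4/9) y (3 - y)`, while the second forces `ẋ = -ẏ/3 = -(r/3) y (3 - y)`;
the two agree exactly when `r = 4/3`, so at that rate the line is invariant and the front,
lifted to the line, connects `(-1, 0)` to `(-2, 3)`.
-/

open Real Filter Topology

namespace Real

theorem hasDerivAt_tanh (x : ℝ) : HasDerivAt tanh (1 - tanh x ^ 2) x := by
  have hcosh : cosh x ≠ 0 := (cosh_pos x).ne'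
  have hquot := (hasDerivAt_sinh x).div (hasDerivAt_cosh x) hcosh
  rw [show sinh / cosh = tanh from funext fun y => (tanh_eq_sinh_div_cosh y).symm] at hquot
  refine hquot.congr_deriv ?_
  rw [tanh_eq_sinh_div_cosh, div_pow, one_sub_div (pow_ne_zero 2 hcosh)]
  ring

theorem tanh_eq_one_sub_two_div (x : ℝ) : tanh x = 1 - 2 / (exp (2 * x) + 1) := by
  have hexp : exp x ≠ 0 := (exp_pos x).ne'
  rw [tanh_eq, exp_neg, two_mul, exp_add]
  field_simp
  ring

theorem tendsto_tanh_atTop : Tendsto tanh atTop (𝓝 1) := by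
  have hdenom : Tendsto (fun x => exp (2 * x) + 1) atTop atTop :=
    tendsto_atTop_add_const_right _ _ <|
      tendsto_exp_atTop.comp (tendsto_id.const_mul_atTop two_pos)
  have hlim := tendsto_const_nhds (x := (1 : ℝ)) |>.sub <|
    (tendsto_const_nhds (x := (2 : ℝ))).div_atTop hdenom
  rw [sub_zero] at hlim
  exact hlim.congr fun x => (tanh_eq_one_sub_two_div x).symm

theorem tendsto_tanh_atBot : Tendsto tanh atBot (𝓝 (-1)) := by
  simpa [Function.comp_def] using (tendsto_tanh_atTop.comp tendsto_neg_atBot_atTop).neg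

end Real

noncomputable def logisticFront (a r t : ℝ) : ℝ := a / 2 * (1 + tanh (a * r * t / 2))

theorem hasDerivAt_logisticFront (a r t : ℝ) :
    HasDerivAt (logisticFront a r)
      (r * logisticFront a r t * (a - logisticFront a r t)) t := by
  have hinner : HasDerivAt (fun t => a * r * t / 2) (a * r / 2) t := by
    simpa using ((hasDerivAt_id t).const_mul (a * r)).div_const 2
  refine ((((hasDerivAt_tanh _).comp t hinner).const_add 1).const_mul (a / 2)).congr_deriv ?_
  simp only [logisticFront]
  ring

theorem tendsto_logisticFront_atTop {a r : ℝ} (har : 0 < a * r) :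
    Tendsto (logisticFront a r) atTop (𝓝 a) := by
  have harg : Tendsto (fun t => a * r * t / 2) atTop atTop :=
    (tendsto_id.const_mul_atTop har).atTop_div_const two_pos
  have hlim := ((tendsto_tanh_atTop.comp harg).const_add 1).const_mul (a / 2)
  rwa [one_add_one_eq_two, div_mul_cancel₀ a two_ne_zero] at hlim

theorem tendsto_logisticFront_atBot {a r : ℝ} (har : 0 < a * r) :
    Tendsto (logisticFront a r) atBot (𝓝 0) := by
  have harg : Tendsto (fun t => a * r * t / 2) atBot atBot :=
    (tendsto_id.const_mul_atBot har).atBot_div_const two_pos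
  have hlim := ((tendsto_tanh_atBot.comp harg).const_add 1).const_mul (a / 2)
  rwa [add_neg_cancel, mul_zero] at hlim

noncomputable def liftToLine {α : Type*} (y : α → ℝ) (t : α) : ℝ × ℝ := (-y t / 3 - 1, y t)

theorem hasDerivAt_liftToLine {y : ℝ → ℝ} {t : ℝ}
    (hy : HasDerivAt y (4 / 3 * y t * (3 - y t)) t) :
    HasDerivAt (liftToLine y)
      (((liftToLine y t).1 + (liftToLine y t).2) ^ 2 - 1,
        4 / 3 * (liftToLine y t).2 * (3 - (liftToLine y t).2)) t := by
  refine (((hy.neg.div_const 3).sub_const 1).prodMk hy).congr_deriv ?_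
  simp only [liftToLine, Prod.mk.injEq, and_true]
  ring

theorem tendsto_liftToLine {α : Type*} {l : Filter α} {y : α → ℝ} {c : ℝ}
    (hy : Tendsto y l (𝓝 c)) :
    Tendsto (liftToLine y) l (𝓝 (-c / 3 - 1, c)) :=
  ((hy.neg.div_const 3).sub_const 1).prodMk_nhds hy

/-- At the critical rate `r = 4/3`, the curve `γ(t) = (−λ(t)/3 − 1, λ(t))` with
`λ(t) = (3/2)(1 + tanh(2t))` is a solution of `ẋ = (x + y)² − 1, ẏ = r·y·(3 − y)`, its image
lies on the line `x = −y/3 − 1`, and `γ(t) → (−1, 0)` as `t → −∞` and `γ(t) → (−2, 3)` as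
`t → +∞`: a heteroclinic connection between the saddles `(−1, 0)` and `(−2, 3)`. -/
theorem heteroclinic_at_critical_rate :
    let r : ℝ := 4 / 3
    let lam : ℝ → ℝ := fun t => (3 / 2) * (1 + Real.tanh (2 * t))
    let γ : ℝ → ℝ × ℝ := fun t => (-(lam t) / 3 - 1, lam t)
    (∀ t : ℝ, HasDerivAt γ
      (((γ t).1 + (γ t).2) ^ 2 - 1, r * (γ t).2 * (3 - (γ t).2)) t) ∧
    (∀ t : ℝ, (γ t).1 = -(γ t).2 / 3 - 1) ∧
    Filter.Tendsto γ Filter.atBot (nhds (-1, 0)) ∧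
    Filter.Tendsto γ Filter.atTop (nhds (-2, 3)) := by
  intro r lam γ
  have hlam : lam = logisticFront 3 (4 / 3) := by
    funext t
    simp only [lam, logisticFront]
    ring_nf
  have hγ : γ = liftToLine (logisticFront 3 (4 / 3)) := by
    rw [← hlam]
    rfl
  have hpos : (0 : ℝ) < 3 * (4 / 3) := by norm_num
  refine ⟨fun t => ?_, fun t => rfl, ?_, ?_⟩ <;> rw [hγ]
  · exact hasDerivAt_liftToLine (hasDerivAt_logisticFront 3 (4 / 3) t)
  · convert tendsto_liftToLine (tendsto_logisticFront_atBot hpos) using 2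
    norm_num
  · convert tendsto_liftToLine (tendsto_logisticFront_atTop hpos) using 2
    norm_num
end

section
/- For every r > 0 and σ ≠ 0, the set of zeros of the vector field F(x, p, y) = ((x + y)² − 1 + σ²p, −2(x + y)p, r·y·(3 − y)) on ℝ³ is exactly the six points {(−1, 0, 0), (1, 0, 0), (0, 1/σ², 0), (−4, 0, 3), (−2, 0, 3), (−3, 1/σ², 3)}. -/
/-- For every `r > 0` and `σ ≠ 0`, the zeros of the vector field
`F(x, p, y) = ((x + y)² − 1 + σ²p, −2(x + y)p, r·y·(3 − y))` on `ℝ³` are exactly the six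
points `{(−1,0,0), (1,0,0), (0,1/σ²,0), (−4,0,3), (−2,0,3), (−3,1/σ²,3)}`. -/
theorem zeros_of_mpp_field (r σ : ℝ) (hr : 0 < r) (hσ : σ ≠ 0) :
    {v : ℝ × ℝ × ℝ |
      ((v.1 + v.2.2) ^ 2 - 1 + σ ^ 2 * v.2.1, -2 * (v.1 + v.2.2) * v.2.1,
        r * v.2.2 * (3 - v.2.2)) = ((0 : ℝ), (0 : ℝ), (0 : ℝ))} =
    {((-1 : ℝ), (0 : ℝ), (0 : ℝ)), (1, 0, 0), (0, 1 / σ ^ 2, 0),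
      (-4, 0, 3), (-2, 0, 3), (-3, 1 / σ ^ 2, 3)} := by
  have hσ2 : σ ^ 2 ≠ 0 := pow_ne_zero 2 hσ
  ext ⟨x, p, y⟩
  simp only [Set.mem_setOf_eq, Prod.mk.injEq, Set.mem_insert_iff,
    Set.mem_singleton_iff]
  constructor
  · rintro ⟨h1, h2, h3⟩
    have hy : y = 0 ∨ y = 3 := by
      rcases mul_eq_zero.1 h3 with h | h
      · rcases mul_eq_zero.1 h with h | h
        · exact absurd h hr.ne'
        · exact Or.inl h
      · right; linarith
    have hp : x + y = 0 ∨ p = 0 := by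
      rcases mul_eq_zero.1 h2 with h | h
      · rcases mul_eq_zero.1 h with h | h
        · norm_num at h
        · exact Or.inl h
      · exact Or.inr h
    rcases hy with hy | hy <;> subst hy <;> rcases hp with hp | hp
    · have hxp : p = 1 / σ ^ 2 := by
        field_simp
        nlinarith
      have hx : x = 0 := by linarith
      exact Or.inr (Or.inr (Or.inl ⟨hx, hxp, rfl⟩))
    · subst hp
      have h : (x + 0 - 1) * (x + 0 + 1) = 0 := by nlinarith
      rcases mul_eq_zero.1 h with h | h
      · exact Or.inr (Or.inl ⟨by linarith, rfl, rfl⟩)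
      · exact Or.inl ⟨by linarith, rfl, rfl⟩
    · have hxp : p = 1 / σ ^ 2 := by
        field_simp
        nlinarith
      have hx : x = -3 := by linarith
      exact Or.inr (Or.inr (Or.inr (Or.inr (Or.inr ⟨hx, hxp, rfl⟩))))
    · subst hp
      have h : (x + 3 - 1) * (x + 3 + 1) = 0 := by nlinarith
      rcases mul_eq_zero.1 h with h | h
      · exact Or.inr (Or.inr (Or.inr (Or.inr (Or.inl ⟨by linarith, rfl, rfl⟩))))
      · exact Or.inr (Or.inr (Or.inr (Or.inl ⟨by linarith, rfl, rfl⟩)))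
  · rintro (⟨hx, hp, hy⟩ | ⟨hx, hp, hy⟩ | ⟨hx, hp, hy⟩ | ⟨hx, hp, hy⟩ | ⟨hx, hp, hy⟩ | ⟨hx, hp, hy⟩) <;>
      subst hx <;> subst hp <;> subst hy <;>
      exact ⟨by field_simp <;> ring, by ring, by ring⟩
end

section
/- (Exit-set computation for the Wazewski argument) Let r > 0 and σ > 0, and let γ(t) = (x(t), p(t), y(t)) be a solution of the system ẋ = (x + y)² − 1 + σ²p, ṗ = −2(x + y)p, ẏ = r·y·(3 − y). Suppose at some time t₀ the solution lies at a point of the curve {x + y = 0, p = (1 − r·y·(3 − y))/σ²} with 0 < y(t₀) < 3/2. Then (d/dt)(x + y)(t₀) = 0 and (d²/dt²)(x + y)(t₀) = r²·y(t₀)·(3 − y(t₀))·(3 − 2y(t₀)) > 0; consequently t₀ is a strict local minimum of t ↦ x(t) + y(t), so the trajectory immediately leaves the region {x + y ≤ 0} on both sides of t₀ except at t₀ itself. In particular, no trajectory can enter the region {x + y < 0} through a point of this curve. -/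
/-- Exit-set computation for the Wazewski argument: along a solution of
`ẋ = (x + y)² − 1 + σ²p, ṗ = −2(x + y)p, ẏ = r·y·(3 − y)`, if at time `t₀` the solution
lies on the curve `{x + y = 0, p = (1 − r·y·(3 − y))/σ²}` with `0 < y(t₀) < 3/2`, then
`(d/dt)(x + y)(t₀) = 0` and `(d²/dt²)(x + y)(t₀) = r²·y(t₀)·(3 − y(t₀))·(3 − 2y(t₀)) > 0`;
consequently `t₀` is a strict local minimum of `t ↦ x(t) + y(t)`, so the trajectory
immediately leaves the region `{x + y ≤ 0}` on both sides of `t₀` except at `t₀` itself. -/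
theorem wazewski_exit (r σ : ℝ) (hr : 0 < r) (hσ : 0 < σ)
    (x p y : ℝ → ℝ)
    (hx : ∀ t : ℝ, HasDerivAt x ((x t + y t) ^ 2 - 1 + σ ^ 2 * p t) t)
    (hp : ∀ t : ℝ, HasDerivAt p (-2 * (x t + y t) * p t) t)
    (hy : ∀ t : ℝ, HasDerivAt y (r * y t * (3 - y t)) t)
    (t₀ : ℝ) (h₁ : x t₀ + y t₀ = 0) (h₂ : p t₀ = (1 - r * y t₀ * (3 - y t₀)) / σ ^ 2)
    (h₃ : 0 < y t₀) (h₄ : y t₀ < 3 / 2) :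
    HasDerivAt (fun t => x t + y t) 0 t₀ ∧
    HasDerivAt (fun t => (x t + y t) ^ 2 - 1 + σ ^ 2 * p t + r * y t * (3 - y t))
      (r ^ 2 * y t₀ * (3 - y t₀) * (3 - 2 * y t₀)) t₀ ∧
    0 < r ^ 2 * y t₀ * (3 - y t₀) * (3 - 2 * y t₀) ∧
    (∀ᶠ t in nhdsWithin t₀ {t₀}ᶜ, x t₀ + y t₀ < x t + y t) ∧
    (∀ᶠ t in nhdsWithin t₀ {t₀}ᶜ, 0 < x t + y t) := by
  have hσ2 : (σ:ℝ) ^ 2 ≠ 0 := by positivity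
  set f : ℝ → ℝ := fun t => (x t + y t) ^ 2 - 1 + σ ^ 2 * p t + r * y t * (3 - y t) with hf_def
  set L : ℝ := r ^ 2 * y t₀ * (3 - y t₀) * (3 - 2 * y t₀) with hL_def
  -- derivative of g = x + y is f
  have hg : ∀ t, HasDerivAt (fun t => x t + y t) (f t) t := fun t => (hx t).add (hy t)
  -- f t₀ = 0
  have hf0 : f t₀ = 0 := by
    simp only [hf_def, h₁, h₂]
    field_simp
    ring
  have hg0 : HasDerivAt (fun t => x t + y t) 0 t₀ := hf0 ▸ hg t₀
  -- derivative of f at t₀ is L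
  have hf' : HasDerivAt f L t₀ := by
    have H : HasDerivAt f
        (2 * (x t₀ + y t₀) ^ 1 * f t₀ + σ ^ 2 * (-2 * (x t₀ + y t₀) * p t₀)
          + ((r * (r * y t₀ * (3 - y t₀))) * (3 - y t₀)
             + (r * y t₀) * (-(r * y t₀ * (3 - y t₀))))) t₀ := by
      exact ((((hg t₀).pow 2).sub_const 1).add ((hp t₀).const_mul (σ ^ 2))).add
        (((hy t₀).const_mul r).mul ((hy t₀).const_sub 3))
    convert H using 1
    rw [hf0, h₁]
    ring
  have hy3 : y t₀ < 3 := by linarith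
  have hLpos : 0 < L := by
    have := sq_nonneg r
    nlinarith [mul_pos (mul_pos (mul_pos (mul_pos hr hr) h₃) (by linarith : (0:ℝ) < 3 - y t₀))
      (by linarith : (0:ℝ) < 3 - 2 * y t₀)]
  -- sign of f near t₀ via slope
  have hslope : Filter.Tendsto (slope f t₀) (nhdsWithin t₀ {t₀}ᶜ) (nhds L) :=
    (hasDerivAt_iff_tendsto_slope).mp hf'
  have hev : ∀ᶠ t in nhdsWithin t₀ {t₀}ᶜ, 0 < slope f t₀ t :=
    hslope.eventually (eventually_gt_nhds hLpos)
  rw [eventually_nhdsWithin_iff] at hev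
  obtain ⟨ε, hε, hball⟩ := Metric.eventually_nhds_iff.mp hev
  have hsign : ∀ t, |t - t₀| < ε → t ≠ t₀ → 0 < f t / (t - t₀) := by
    intro t ht hne
    have := hball (by rwa [Real.dist_eq]) hne
    rwa [slope_def_field, hf0, sub_zero] at this
  have hpos_right : ∀ t ∈ Set.Ioo t₀ (t₀ + ε), 0 < f t := by
    intro t ht
    have h1 : 0 < t - t₀ := by linarith [ht.1]
    have h2 : |t - t₀| < ε := by rw [abs_of_pos h1]; linarith [ht.2]
    have := hsign t h2 (by intro h; simp [h] at h1)
    exact (div_pos_iff.mp this).resolve_right (fun h => absurd h.2 (not_lt.mpr h1.le)) |>.1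
  have hneg_left : ∀ t ∈ Set.Ioo (t₀ - ε) t₀, f t < 0 := by
    intro t ht
    have h1 : t - t₀ < 0 := by linarith [ht.2]
    have h2 : |t - t₀| < ε := by rw [abs_of_neg h1]; linarith [ht.1]
    have := hsign t h2 (by intro h; simp [h] at h1)
    rcases div_pos_iff.mp this with h | h
    · exact absurd h.2 (not_lt.mpr h1.le)
    · exact h.1
  -- strict monotonicity on [t₀, t₀+ε], strict antitonicity on [t₀-ε, t₀]
  set g : ℝ → ℝ := fun t => x t + y t with hg_def
  have hcont : Continuous g := by
    have : Differentiable ℝ g := fun t => (hg t).differentiableAt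
    exact this.continuous
  have hmono : StrictMonoOn g (Set.Icc t₀ (t₀ + ε)) := by
    apply strictMonoOn_of_deriv_pos (convex_Icc _ _) hcont.continuousOn
    intro t ht
    rw [interior_Icc] at ht
    rw [(hg t).deriv]
    exact hpos_right t ht
  have hanti : StrictAntiOn g (Set.Icc (t₀ - ε) t₀) := by
    apply strictAntiOn_of_deriv_neg (convex_Icc _ _) hcont.continuousOn
    intro t ht
    rw [interior_Icc] at ht
    rw [(hg t).deriv]
    exact hneg_left t ht
  have hmin : ∀ᶠ t in nhdsWithin t₀ {t₀}ᶜ, g t₀ < g t := by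
    have hIoo : ∀ᶠ t in nhdsWithin t₀ {t₀}ᶜ, t ∈ Set.Ioo (t₀ - ε) (t₀ + ε) :=
      eventually_nhdsWithin_of_eventually_nhds
        (Ioo_mem_nhds (by linarith) (by linarith))
    have hne : ∀ᶠ t in nhdsWithin t₀ {t₀}ᶜ, t ≠ t₀ := by
      filter_upwards [self_mem_nhdsWithin] with t ht using ht
    filter_upwards [hIoo, hne] with t ht htne
    rcases lt_or_gt_of_ne htne with h | h
    · exact hanti (Set.mem_Icc.mpr ⟨ht.1.le, h.le⟩)
        (Set.mem_Icc.mpr ⟨by linarith, le_refl _⟩) h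
    · exact hmono (Set.mem_Icc.mpr ⟨le_refl _, by linarith⟩)
        (Set.mem_Icc.mpr ⟨h.le, ht.2.le⟩) h
  refine ⟨hg0, hf', hLpos, hmin, ?_⟩
  filter_upwards [hmin] with t ht
  simpa [hg_def, h₁] using ht
end

section
/- (Proposition 3: reversing symmetry) Let r > 0 and σ > 0, let F(x, p, y) = ((x + y)² − 1 + σ²p, −2(x + y)p, r·y·(3 − y)), and let T : ℝ³ → ℝ³ be the affine map T(x, p, y) = (−x − 3, p, 3 − y). Then for every v = (x, p, y) ∈ ℝ³, F(T(v)) = (F₁(v), −F₂(v), F₃(v)), where F₁, F₂, F₃ are the components of F. Consequently, if γ : ℝ → ℝ³ is a solution of the system ẋ = (x + y)² − 1 + σ²p, ṗ = −2(x + y)p, ẏ = r·y·(3 − y), then the curve η(t) = T(γ(−t)) is also a solution of the same system. -/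
/-!
Write `T v = L v + c` with `L = diag(-1, 1, -1)`. The identity `F ∘ T = -L ∘ F` is a polynomial
identity in the coordinates. Differentiating `η(t) = T(γ(-t))` by the chain rule gives
`η'(t) = L(-F(γ(-t))) = F(T(γ(-t))) = F(η(t))`, so time reversal combined with `T` maps
solutions to solutions.
-/

theorem hasDerivAt_reversed_solution {E : Type*} [NormedAddCommGroup E] [NormedSpace ℝ E]
    {F T : E → E} {L : E →L[ℝ] E} (hT : ∀ v, HasFDerivAt T L v) (hFT : ∀ v, F (T v) = -L (F v))
    {γ : ℝ → E} (hγ : ∀ t, HasDerivAt γ (F (γ t)) t) (t : ℝ) :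
    HasDerivAt (fun t => T (γ (-t))) (F (T (γ (-t)))) t := by
  have hreversed : HasDerivAt (fun s => γ (-s)) (-F (γ (-t))) t := by
    simpa [Function.comp_def] using (hγ (-t)).scomp t (hasDerivAt_neg t)
  rw [hFT, ← map_neg]
  exact (hT _).comp_hasDerivAt t hreversed

namespace MostProbablePath

def field (r σ : ℝ) (v : ℝ × ℝ × ℝ) : ℝ × ℝ × ℝ :=
  ((v.1 + v.2.2) ^ 2 - 1 + σ ^ 2 * v.2.1, -2 * (v.1 + v.2.2) * v.2.1, r * v.2.2 * (3 - v.2.2))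

def reversal (v : ℝ × ℝ × ℝ) : ℝ × ℝ × ℝ :=
  (-v.1 - 3, v.2.1, 3 - v.2.2)

def reversalLinear : ℝ × ℝ × ℝ →L[ℝ] ℝ × ℝ × ℝ :=
  (-ContinuousLinearMap.id ℝ ℝ).prodMap
    ((ContinuousLinearMap.id ℝ ℝ).prodMap (-ContinuousLinearMap.id ℝ ℝ))

theorem reversal_eq_add (v : ℝ × ℝ × ℝ) : reversal v = reversalLinear v + (-3, 0, 3) := by
  ext <;> simp [reversal, reversalLinear] <;> ring

theorem hasFDerivAt_reversal (v : ℝ × ℝ × ℝ) : HasFDerivAt reversal reversalLinear v := by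
  rw [show reversal = fun v => reversalLinear v + (-3, 0, 3) from funext reversal_eq_add]
  exact reversalLinear.hasFDerivAt.add_const _

theorem field_reversal (r σ : ℝ) (v : ℝ × ℝ × ℝ) :
    field r σ (reversal v) = ((field r σ v).1, -(field r σ v).2.1, (field r σ v).2.2) := by
  simp only [field, reversal, Prod.mk.injEq]
  exact ⟨by ring, by ring, by ring⟩

theorem field_reversal_eq_neg (r σ : ℝ) (v : ℝ × ℝ × ℝ) :
    field r σ (reversal v) = -reversalLinear (field r σ v) := by
  rw [field_reversal]
  ext <;> simp [reversalLinear]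

end MostProbablePath

theorem reversing_symmetry_general (r σ : ℝ) :
    let F : ℝ × ℝ × ℝ → ℝ × ℝ × ℝ := fun v =>
      ((v.1 + v.2.2) ^ 2 - 1 + σ ^ 2 * v.2.1, -2 * (v.1 + v.2.2) * v.2.1,
        r * v.2.2 * (3 - v.2.2))
    let T : ℝ × ℝ × ℝ → ℝ × ℝ × ℝ := fun v => (-v.1 - 3, v.2.1, 3 - v.2.2)
    (∀ v : ℝ × ℝ × ℝ, F (T v) = ((F v).1, -(F v).2.1, (F v).2.2)) ∧
    (∀ γ : ℝ → ℝ × ℝ × ℝ, (∀ t : ℝ, HasDerivAt γ (F (γ t)) t) →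
      ∀ t : ℝ, HasDerivAt (fun t => T (γ (-t))) (F (T (γ (-t)))) t) :=
  ⟨MostProbablePath.field_reversal r σ, fun _ hγ =>
    hasDerivAt_reversed_solution MostProbablePath.hasFDerivAt_reversal
      (MostProbablePath.field_reversal_eq_neg r σ) hγ⟩

/-- Reversing symmetry (Proposition 3): with
`F(x, p, y) = ((x + y)² − 1 + σ²p, −2(x + y)p, r·y·(3 − y))` and the affine map
`T(x, p, y) = (−x − 3, p, 3 − y)`, one has `F(T(v)) = (F₁(v), −F₂(v), F₃(v))` for every
`v ∈ ℝ³`; consequently, if `γ` is a solution of the most probable path system, then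
`η(t) = T(γ(−t))` is also a solution of the same system. -/
theorem reversing_symmetry (r σ : ℝ) (hr : 0 < r) (hσ : 0 < σ) :
    let F : ℝ × ℝ × ℝ → ℝ × ℝ × ℝ := fun v =>
      ((v.1 + v.2.2) ^ 2 - 1 + σ ^ 2 * v.2.1, -2 * (v.1 + v.2.2) * v.2.1,
        r * v.2.2 * (3 - v.2.2))
    let T : ℝ × ℝ × ℝ → ℝ × ℝ × ℝ := fun v => (-v.1 - 3, v.2.1, 3 - v.2.2)
    (∀ v : ℝ × ℝ × ℝ, F (T v) = ((F v).1, -(F v).2.1, (F v).2.2)) ∧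
    (∀ γ : ℝ → ℝ × ℝ × ℝ, (∀ t : ℝ, HasDerivAt γ (F (γ t)) t) →
      ∀ t : ℝ, HasDerivAt (fun t => T (γ (-t))) (F (T (γ (-t)))) t) :=
  reversing_symmetry_general r σ
end

section
/- (Symmetry exchanges the saddles) Let r > 0 and σ > 0 and let T(x, p, y) = (−x − 3, p, 3 − y). Then T(−1, 0, 0) = (−2, 0, 3) and T(−2, 0, 3) = (−1, 0, 0). Moreover, if γ : ℝ → ℝ³ is a solution of the system ẋ = (x + y)² − 1 + σ²p, ṗ = −2(x + y)p, ẏ = r·y·(3 − y) with γ(t) → s₁ = (−1, 0, 0) as t → −∞, then η(t) = T(γ(−t)) is a solution of the same system with η(t) → s₂ = (−2, 0, 3) as t → +∞. In particular, the unstable set of s₁ (points on solutions converging to s₁ in backward time) is mapped by T onto the stable set of s₂ (points on solutions converging to s₂ in forward time). -/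
/-! If `T` is a reversing symmetry of `ẋ = F x`, i.e. its derivative `L` satisfies
`L (F v) = -F (T v)`, then `t ↦ T (γ (-t))` is a solution whenever `γ` is: time reversal flips
the sign of the velocity and `T` flips it back. Reversing time also exchanges the limits at `-∞`
and `+∞`, so an involutive reversing symmetry maps the unstable set of an equilibrium `s` onto
the stable set of `T s`. The map `(x, p, y) ↦ (-x - 3, p, 3 - y)` is such a symmetry of the most
probable path system, because it fixes `p` and `y (3 - y)` and negates `x + y`. -/

open Filter Topology Set

section ReversingSymmetry

variable {E : Type*} [NormedAddCommGroup E] [NormedSpace ℝ E] {F T : E → E} {L : E →L[ℝ] E}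

def unstableSet (F : E → E) (s : E) : Set E :=
  {v | ∃ γ : ℝ → E, (∀ t, HasDerivAt γ (F (γ t)) t) ∧ γ 0 = v ∧ Tendsto γ atBot (𝓝 s)}

def stableSet (F : E → E) (s : E) : Set E :=
  {v | ∃ γ : ℝ → E, (∀ t, HasDerivAt γ (F (γ t)) t) ∧ γ 0 = v ∧ Tendsto γ atTop (𝓝 s)}

theorem hasDerivAt_reverse (hT : ∀ v, HasFDerivAt T L v) (hrev : ∀ v, L (F v) = -F (T v))
    {γ : ℝ → E} (hγ : ∀ t, HasDerivAt γ (F (γ t)) t) (t : ℝ) :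
    HasDerivAt (fun t => T (γ (-t))) (F (T (γ (-t)))) t := by
  have h := (hT (γ (-t))).comp_hasDerivAt t ((hγ (-t)).scomp t (hasDerivAt_neg t))
  rwa [neg_one_smul, map_neg, hrev, neg_neg] at h

theorem tendsto_reverse_atTop (hT : ∀ v, HasFDerivAt T L v) {γ : ℝ → E} {s : E}
    (hγ : Tendsto γ atBot (𝓝 s)) : Tendsto (fun t => T (γ (-t))) atTop (𝓝 (T s)) :=
  (hT s).continuousAt.tendsto.comp (hγ.comp tendsto_neg_atTop_atBot)

theorem tendsto_reverse_atBot (hT : ∀ v, HasFDerivAt T L v) {γ : ℝ → E} {s : E}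
    (hγ : Tendsto γ atTop (𝓝 s)) : Tendsto (fun t => T (γ (-t))) atBot (𝓝 (T s)) :=
  (hT s).continuousAt.tendsto.comp (hγ.comp tendsto_neg_atBot_atTop)

theorem mapsTo_unstableSet_stableSet (hT : ∀ v, HasFDerivAt T L v)
    (hrev : ∀ v, L (F v) = -F (T v)) (s : E) :
    MapsTo T (unstableSet F s) (stableSet F (T s)) := by
  rintro _ ⟨γ, hγ, rfl, hlim⟩
  exact ⟨_, hasDerivAt_reverse hT hrev hγ, by rw [neg_zero], tendsto_reverse_atTop hT hlim⟩

theorem mapsTo_stableSet_unstableSet (hT : ∀ v, HasFDerivAt T L v)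
    (hrev : ∀ v, L (F v) = -F (T v)) (s : E) :
    MapsTo T (stableSet F s) (unstableSet F (T s)) := by
  rintro _ ⟨γ, hγ, rfl, hlim⟩
  exact ⟨_, hasDerivAt_reverse hT hrev hγ, by rw [neg_zero], tendsto_reverse_atBot hT hlim⟩

theorem image_unstableSet_eq_stableSet (hT : ∀ v, HasFDerivAt T L v)
    (hrev : ∀ v, L (F v) = -F (T v)) (hinv : Function.Involutive T) (s : E) :
    T '' unstableSet F s = stableSet F (T s) := by
  refine (mapsTo_unstableSet_stableSet hT hrev s).image_subset.antisymm fun v hv => ?_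
  refine ⟨T v, ?_, hinv v⟩
  simpa only [hinv s] using mapsTo_stableSet_unstableSet hT hrev (T s) hv

end ReversingSymmetry

def mostProbablePathField (r σ : ℝ) (v : ℝ × ℝ × ℝ) : ℝ × ℝ × ℝ :=
  ((v.1 + v.2.2) ^ 2 - 1 + σ ^ 2 * v.2.1, -2 * (v.1 + v.2.2) * v.2.1, r * v.2.2 * (3 - v.2.2))

def saddleSymmetry (v : ℝ × ℝ × ℝ) : ℝ × ℝ × ℝ := (-v.1 - 3, v.2.1, 3 - v.2.2)

def saddleSymmetryDeriv : ℝ × ℝ × ℝ →L[ℝ] ℝ × ℝ × ℝ :=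
  (-ContinuousLinearMap.id ℝ ℝ).prodMap
    ((ContinuousLinearMap.id ℝ ℝ).prodMap (-ContinuousLinearMap.id ℝ ℝ))

theorem hasFDerivAt_saddleSymmetry (v : ℝ × ℝ × ℝ) :
    HasFDerivAt saddleSymmetry saddleSymmetryDeriv v := by
  have h : saddleSymmetry = fun v => saddleSymmetryDeriv v + (-3, 0, 3) := by
    ext v <;>
      simp only [saddleSymmetry, saddleSymmetryDeriv, ContinuousLinearMap.coe_prodMap',
        ContinuousLinearMap.coe_id', FunLike.coe_neg, Prod.fst_add, Prod.snd_add, Prod.map_fst,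
        Prod.map_snd, Pi.neg_apply, id_eq] <;>
      ring
  rw [h]
  exact saddleSymmetryDeriv.hasFDerivAt.add_const _

theorem saddleSymmetryDeriv_mostProbablePathField (r σ : ℝ) (v : ℝ × ℝ × ℝ) :
    saddleSymmetryDeriv (mostProbablePathField r σ v) =
      -mostProbablePathField r σ (saddleSymmetry v) := by
  simp only [saddleSymmetryDeriv, mostProbablePathField, saddleSymmetry,
    ContinuousLinearMap.coe_prodMap', ContinuousLinearMap.coe_id', FunLike.coe_neg, Prod.map_apply,
    Pi.neg_apply, id_eq, Prod.neg_mk]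
  ext <;> ring

theorem saddleSymmetry_involutive : Function.Involutive saddleSymmetry := by
  intro v
  ext <;> simp [saddleSymmetry]

theorem symmetry_exchanges_saddles_general (r σ : ℝ) :
    let F : ℝ × ℝ × ℝ → ℝ × ℝ × ℝ := fun v =>
      ((v.1 + v.2.2) ^ 2 - 1 + σ ^ 2 * v.2.1, -2 * (v.1 + v.2.2) * v.2.1,
        r * v.2.2 * (3 - v.2.2))
    let T : ℝ × ℝ × ℝ → ℝ × ℝ × ℝ := fun v => (-v.1 - 3, v.2.1, 3 - v.2.2)
    let s₁ : ℝ × ℝ × ℝ := (-1, 0, 0)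
    let s₂ : ℝ × ℝ × ℝ := (-2, 0, 3)
    T s₁ = s₂ ∧ T s₂ = s₁ ∧
    (∀ γ : ℝ → ℝ × ℝ × ℝ, (∀ t : ℝ, HasDerivAt γ (F (γ t)) t) →
      Filter.Tendsto γ Filter.atBot (nhds s₁) →
      ((∀ t : ℝ, HasDerivAt (fun t => T (γ (-t))) (F (T (γ (-t)))) t) ∧
        Filter.Tendsto (fun t => T (γ (-t))) Filter.atTop (nhds s₂))) ∧
    T '' {v : ℝ × ℝ × ℝ | ∃ γ : ℝ → ℝ × ℝ × ℝ,
        (∀ t : ℝ, HasDerivAt γ (F (γ t)) t) ∧ γ 0 = v ∧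
          Filter.Tendsto γ Filter.atBot (nhds s₁)} =
      {v : ℝ × ℝ × ℝ | ∃ γ : ℝ → ℝ × ℝ × ℝ,
        (∀ t : ℝ, HasDerivAt γ (F (γ t)) t) ∧ γ 0 = v ∧
          Filter.Tendsto γ Filter.atTop (nhds s₂)} := by
  intro F T s₁ s₂
  have hT : ∀ v, HasFDerivAt T saddleSymmetryDeriv v := hasFDerivAt_saddleSymmetry
  have hrev : ∀ v, saddleSymmetryDeriv (F v) = -F (T v) :=
    saddleSymmetryDeriv_mostProbablePathField r σ
  have hs₁ : T s₁ = s₂ := by norm_num [T, s₁, s₂]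
  refine ⟨hs₁, by norm_num [T, s₁, s₂], fun γ hγ hlim => ?_, ?_⟩
  · exact ⟨hasDerivAt_reverse hT hrev hγ, hs₁ ▸ tendsto_reverse_atTop hT hlim⟩
  · exact hs₁ ▸ image_unstableSet_eq_stableSet hT hrev saddleSymmetry_involutive s₁

/-- The symmetry `T(x, p, y) = (−x − 3, p, 3 − y)` exchanges the saddles:
`T(−1, 0, 0) = (−2, 0, 3)` and `T(−2, 0, 3) = (−1, 0, 0)`; if `γ` is a solution of the
most probable path system with `γ(t) → s₁ = (−1, 0, 0)` as `t → −∞`, then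
`η(t) = T(γ(−t))` is a solution with `η(t) → s₂ = (−2, 0, 3)` as `t → +∞`; and `T` maps
the unstable set of `s₁` onto the stable set of `s₂`. -/
theorem symmetry_exchanges_saddles (r σ : ℝ) (hr : 0 < r) (hσ : 0 < σ) :
    let F : ℝ × ℝ × ℝ → ℝ × ℝ × ℝ := fun v =>
      ((v.1 + v.2.2) ^ 2 - 1 + σ ^ 2 * v.2.1, -2 * (v.1 + v.2.2) * v.2.1,
        r * v.2.2 * (3 - v.2.2))
    let T : ℝ × ℝ × ℝ → ℝ × ℝ × ℝ := fun v => (-v.1 - 3, v.2.1, 3 - v.2.2)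
    let s₁ : ℝ × ℝ × ℝ := (-1, 0, 0)
    let s₂ : ℝ × ℝ × ℝ := (-2, 0, 3)
    T s₁ = s₂ ∧ T s₂ = s₁ ∧
    (∀ γ : ℝ → ℝ × ℝ × ℝ, (∀ t : ℝ, HasDerivAt γ (F (γ t)) t) →
      Filter.Tendsto γ Filter.atBot (nhds s₁) →
      ((∀ t : ℝ, HasDerivAt (fun t => T (γ (-t))) (F (T (γ (-t)))) t) ∧
        Filter.Tendsto (fun t => T (γ (-t))) Filter.atTop (nhds s₂))) ∧
    T '' {v : ℝ × ℝ × ℝ | ∃ γ : ℝ → ℝ × ℝ × ℝ,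
        (∀ t : ℝ, HasDerivAt γ (F (γ t)) t) ∧ γ 0 = v ∧
          Filter.Tendsto γ Filter.atBot (nhds s₁)} =
      {v : ℝ × ℝ × ℝ | ∃ γ : ℝ → ℝ × ℝ × ℝ,
        (∀ t : ℝ, HasDerivAt γ (F (γ t)) t) ∧ γ 0 = v ∧
          Filter.Tendsto γ Filter.atTop (nhds s₂)} :=
  symmetry_exchanges_saddles_general r σ
end

section
/- Fix r = 4/3. The line L = {(x, y) ∈ ℝ² : x = −y/3 − 1} is invariant under the flow of the system ẋ = (x + y)² − 1, ẏ = r·y·(3 − y): at every point (x, y) ∈ L the vector field G(x, y) = ((x + y)² − 1, r·y·(3 − y)) is tangent to L, i.e., its first component equals −1/3 times its second component; consequently any solution with initial condition on L remains on L for all time. -/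
/-! Along a solution the defect `d = x + y/3 + 1` of the line satisfies the linear equation
`d' = (d + 4y/3 - 2) d`, whose coefficient is continuous in time; by uniqueness of solutions
of linear equations, `d(0) = 0` forces `d ≡ 0`. -/

open Set

theorem eq_zero_of_hasDerivAt_smul_self {E : Type*} [NormedAddCommGroup E] [NormedSpace ℝ E]
    {f : ℝ → E} {c : ℝ → ℝ} (hc : Continuous c) (hf : ∀ t, HasDerivAt f (c t • f t) t)
    {t₀ : ℝ} (hf₀ : f t₀ = 0) (t : ℝ) : f t = 0 := by
  obtain ⟨a, b, ht, ht₀⟩ : ∃ a b, t ∈ Ioo a b ∧ t₀ ∈ Ioo a b :=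
    ⟨min t t₀ - 1, max t t₀ + 1, by grind⟩
  obtain ⟨C, hC⟩ := isCompact_Icc.exists_bound_of_continuousOn (hc.continuousOn (s := Icc a b))
  have hlip : ∀ s ∈ Ioo a b, LipschitzOnWith C.toNNReal (fun x : E ↦ c s • x) univ :=
    fun s hs ↦ ((lipschitzWith_smul (c s)).weaken
      (NNReal.le_toNNReal_of_coe_le (hC s (Ioo_subset_Icc_self hs)))).lipschitzOnWith
  exact ODE_solution_unique_of_mem_Ioo (g := 0) hlip ht₀ (fun s _ ↦ ⟨hf s, trivial⟩)
    (fun s _ ↦ ⟨by simp, trivial⟩) hf₀ ht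

noncomputable def lineDefect (v : ℝ × ℝ) : ℝ := v.1 + v.2 / 3 + 1

theorem lineDefect_eq_zero_iff (v : ℝ × ℝ) : lineDefect v = 0 ↔ v.1 = -v.2 / 3 - 1 := by
  unfold lineDefect
  constructor <;> intro h <;> linarith

theorem critical_field_lineDefect (v : ℝ × ℝ) :
    ((v.1 + v.2) ^ 2 - 1) + 4 / 3 * v.2 * (3 - v.2) / 3 =
      (lineDefect v + 4 * v.2 / 3 - 2) * lineDefect v := by
  unfold lineDefect
  ring

theorem HasDerivAt.lineDefect_comp {γ : ℝ → ℝ × ℝ} {γ' : ℝ × ℝ} {t : ℝ}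
    (hγ : HasDerivAt γ γ' t) : HasDerivAt (fun s ↦ lineDefect (γ s)) (γ'.1 + γ'.2 / 3) t := by
  have h₁ : HasDerivAt (fun s ↦ (γ s).1) γ'.1 t := hγ.fst
  have h₂ : HasDerivAt (fun s ↦ (γ s).2) γ'.2 t := hγ.snd
  exact (h₁.add (h₂.div_const 3)).add_const 1

@[fun_prop]
theorem continuous_lineDefect : Continuous lineDefect := by
  unfold lineDefect
  fun_prop

/-- At the critical rate `r = 4/3`, the line `L = {x = −y/3 − 1}` is invariant under
`ẋ = (x + y)² − 1, ẏ = r·y·(3 − y)`: at every point of `L` the first component of the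
vector field equals `−1/3` times the second component (tangency), and consequently any
solution with initial condition on `L` remains on `L` for all time. -/
theorem critical_line_invariant :
    let r : ℝ := 4 / 3
    let L : Set (ℝ × ℝ) := {v : ℝ × ℝ | v.1 = -v.2 / 3 - 1}
    (∀ v ∈ L, (v.1 + v.2) ^ 2 - 1 = (-(1 / 3)) * (r * v.2 * (3 - v.2))) ∧
    (∀ γ : ℝ → ℝ × ℝ,
      (∀ t : ℝ, HasDerivAt γ
        (((γ t).1 + (γ t).2) ^ 2 - 1, r * (γ t).2 * (3 - (γ t).2)) t) →
      γ 0 ∈ L → ∀ t : ℝ, γ t ∈ L) := by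
  intro r L
  have hL (v : ℝ × ℝ) : v ∈ L ↔ lineDefect v = 0 := (lineDefect_eq_zero_iff v).symm
  refine ⟨fun v hv ↦ ?_, fun γ hγ h₀ t ↦ ?_⟩
  · have := critical_field_lineDefect v
    rw [(hL v).1 hv, mul_zero] at this
    linarith
  · have hγc : Continuous γ := continuous_iff_continuousAt.mpr fun s ↦ (hγ s).continuousAt
    rw [hL] at h₀ ⊢
    refine eq_zero_of_hasDerivAt_smul_self (f := fun s ↦ lineDefect (γ s))
      (c := fun s ↦ lineDefect (γ s) + 4 * (γ s).2 / 3 - 2)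
      (by fun_prop) (fun s ↦ ?_) h₀ t
    exact (hγ s).lineDefect_comp.congr_deriv (critical_field_lineDefect (γ s))
end
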